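/- Assume x̄ ≠ 0 and ε̃ ≥ 0. Then 0 is a strict local maximizer of g: there exists δ > 0 such that g(x) < g(0) for every x ∈ ℝⁿ with 0 < ‖x‖ < δ. -/

import Mathlib

/-!
Since `g x - g 0 = ‖x‖² ((3/4)‖x‖² - (1/2)‖x̄‖² - ε̃/2) - ⟪x̄, x⟫²`, the quadratic term
`-(1/2)(‖x̄‖² + ε̃)‖x‖²` is strictly negative for `x ≠ 0` and dominates the quartic term
`(3/4)‖x‖⁴` as soon as `3‖x‖² < 2(‖x̄‖² + ε̃)`; `δ = ‖x̄‖ / 2` is small enough.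
-/

open scoped RealInnerProductSpace BigOperators

/-- The expectation `g` of the noisy phase-retrieval objective (up to an additive constant). -/
noncomputable def gObj (n : ℕ) (xbar : EuclideanSpace ℝ (Fin n)) (εt : ℝ)
    (x : EuclideanSpace ℝ (Fin n)) : ℝ :=
  (3 / 4) * (‖x‖ ^ 4 + ‖xbar‖ ^ 4) - (1 / 2) * ‖xbar‖ ^ 2 * ‖x‖ ^ 2 - ⟪xbar, x⟫ ^ 2
    - (εt / 2) * (‖x‖ ^ 2 - ‖xbar‖ ^ 2)

/-- The gradient of `g`. -/
noncomputable def gGrad (n : ℕ) (xbar : EuclideanSpace ℝ (Fin n)) (εt : ℝ)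
    (x : EuclideanSpace ℝ (Fin n)) : EuclideanSpace ℝ (Fin n) :=
  (3 * ‖x‖ ^ 2) • x - (2 * ⟪xbar, x⟫) • xbar - (‖xbar‖ ^ 2 + εt) • x

section

variable {n : ℕ} (xbar : EuclideanSpace ℝ (Fin n)) (εt : ℝ) (x : EuclideanSpace ℝ (Fin n))

theorem gObj_sub_gObj_zero :
    gObj n xbar εt x - gObj n xbar εt 0 =
      ‖x‖ ^ 2 * ((3 / 4) * ‖x‖ ^ 2 - (1 / 2) * ‖xbar‖ ^ 2 - εt / 2) - ⟪xbar, x⟫ ^ 2 := by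
  simp only [gObj, norm_zero, inner_zero_right]
  ring

variable {xbar εt x}

theorem gObj_lt_gObj_zero (hx : 0 < ‖x‖) (hsmall : 3 * ‖x‖ ^ 2 < 2 * (‖xbar‖ ^ 2 + εt)) :
    gObj n xbar εt x < gObj n xbar εt 0 := by
  have hquad : ‖x‖ ^ 2 * ((3 / 4) * ‖x‖ ^ 2 - (1 / 2) * ‖xbar‖ ^ 2 - εt / 2) < 0 :=
    mul_neg_of_pos_of_neg (by positivity) (by linarith)
  have hdiff := gObj_sub_gObj_zero xbar εt x
  linarith [sq_nonneg ⟪xbar, x⟫]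

end

/-- `0` is a strict local maximizer of `g`. -/
theorem stmt8 (n : ℕ) (xbar : EuclideanSpace ℝ (Fin n)) (hxbar : xbar ≠ 0)
    (εt : ℝ) (hεt : 0 ≤ εt) :
    ∃ δ > (0 : ℝ), ∀ x : EuclideanSpace ℝ (Fin n),
      0 < ‖x‖ → ‖x‖ < δ → gObj n xbar εt x < gObj n xbar εt 0 := by
  have hxbar_pos : 0 < ‖xbar‖ := norm_pos_iff.mpr hxbar
  refine ⟨‖xbar‖ / 2, half_pos hxbar_pos, fun x hx hxδ => gObj_lt_gObj_zero hx ?_⟩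
  have hsq : ‖x‖ ^ 2 < (‖xbar‖ / 2) ^ 2 := pow_lt_pow_left₀ hxδ hx.le two_ne_zero
  nlinarith [sq_nonneg ‖xbar‖]
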